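/- (Dense triplets claim) For every α > 0 there exists δ > 0 such that for all integers t ≥ t₀ ≥ 1/δ there exists n₀ ∈ ℕ such that for all n ≥ n₀ the following holds. Let H = ([n], E) be a 3-graph with d(i,j) ≥ min(i, j, n/2) + αn for all pairs {i,j} of distinct vertices, and let [n] = V₀ ∪̇ V₁ ∪̇ … ∪̇ V_t be a partition with |V₀| ≤ δn, |V₁| = … = |V_t| = m where (1−δ)n/t ≤ m ≤ n/t, and such that every vertex v ∈ V_i (i ∈ [t]) satisfies v ≥ i·m − n/t₀. Then for every pair {i,j} of distinct indices in [t], the number of indices k ∈ [t] \ {i,j} with e(V_i, V_j, V_k) ≥ (α/2)·m³ is at least min(i, j, t/2) + (α/3)·t. -/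

import Mathlib

/-!
Double counting. Summing `e(V_i, V_j, V_k)` over all classes `k` counts every pair degree
`d(u, v)` with `u ∈ V_i`, `v ∈ V_j` once. Since `v ≥ l·m − n/t₀ ≥ l·m − δn` on `V_l`, the degree
condition gives `d(u, v) ≥ A·m − δn + αn` with `A = min(i, j, t/2)`, so the sum is at least
`m²(A·m − δn + αtm)`. On the other hand `V₀` contributes at most `δn·m²`, the classes `V_i`, `V_j`
and each dense class at most `m³`, and each of the at most `t` sparse classes less than
`(α/2)·m³`. Using `n ≤ 2tm`, dividing by `m³` leaves at least `A + αt/2 − 4δt − 2` dense classes,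
which is at least `A + αt/3` as soon as `48δ ≤ α` and `δt ≥ 1`.
-/

/-- `E` is the edge set of a 3-uniform hypergraph on vertex set `[n] = {1, …, n}`. -/
def IsThreeGraph (n : ℕ) (E : Finset (Finset ℕ)) : Prop :=
  ∀ e ∈ E, e.card = 3 ∧ e ⊆ Finset.Icc 1 n

/-- The pair degree `d(i,j)`: the number of vertices `x` with `{i,j,x} ∈ E`. -/
def pairDeg (n : ℕ) (E : Finset (Finset ℕ)) (i j : ℕ) : ℕ :=
  ((Finset.Icc 1 n).filter fun x => ({i, j, x} : Finset ℕ) ∈ E).card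

/-- The degree condition `d(i,j) ≥ min(i, j, n/2) + αn` for all distinct `i, j ∈ [n]`. -/
def DegCond (n : ℕ) (E : Finset (Finset ℕ)) (α : ℝ) : Prop :=
  ∀ i ∈ Finset.Icc 1 n, ∀ j ∈ Finset.Icc 1 n, i ≠ j →
    min (min (i : ℝ) (j : ℝ)) ((n : ℝ) / 2) + α * n ≤ (pairDeg n E i j : ℝ)

/-- `e(V₁, V₂, V₃)`: the number of triples `(v₁, v₂, v₃) ∈ V₁ × V₂ × V₃` with
`{v₁, v₂, v₃} ∈ E`. -/
def tripleCount (E : Finset (Finset ℕ)) (V₁ V₂ V₃ : Finset ℕ) : ℕ :=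
  ((V₁ ×ˢ V₂ ×ˢ V₃).filter fun t => ({t.1, t.2.1, t.2.2} : Finset ℕ) ∈ E).card

open scoped Classical

section

open Finset

lemma Finset.sum_le_card_filter_mul_add {ι R : Type*} [CommRing R] [LinearOrder R]
    [IsStrictOrderedRing R] (s : Finset ι) (f : ι → R) {M c : R} (hM : ∀ k ∈ s, f k ≤ M)
    (hc : 0 ≤ c) : ∑ k ∈ s, f k ≤ #(s.filter fun k => c ≤ f k) * M + #s * c := by
  rw [← sum_filter_add_sum_filter_not s fun k => c ≤ f k]
  have hlarge := sum_le_card_nsmul (s.filter fun k => c ≤ f k) f M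
    fun k hk => hM k (mem_filter.1 hk).1
  have hsmall := sum_le_card_nsmul (s.filter fun k => ¬c ≤ f k) f c
    fun k hk => (not_le.1 (mem_filter.1 hk).2).le
  have hcard : (#(s.filter fun k => ¬c ≤ f k) : R) ≤ #s := by
    exact_mod_cast card_filter_le s _
  rw [nsmul_eq_mul] at hlarge hsmall
  linarith [mul_le_mul_of_nonneg_right hcard hc]

lemma Finset.card_filter_le_card_filter_erase_add_one {ι : Type*} [DecidableEq ι] (s : Finset ι)
    (p : ι → Prop) [DecidablePred p] (a : ι) :
    #(s.filter p) ≤ #((s.erase a).filter p) + 1 := by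
  rw [filter_erase]
  have := pred_card_le_card_erase (s := s.filter p) (a := a)
  omega

lemma tripleCount_eq_sum (E : Finset (Finset ℕ)) (V₁ V₂ V₃ : Finset ℕ) :
    tripleCount E V₁ V₂ V₃ =
      ∑ u ∈ V₁, ∑ v ∈ V₂, #(V₃.filter fun x => ({u, v, x} : Finset ℕ) ∈ E) := by
  rw [tripleCount, card_filter, sum_product]
  refine sum_congr rfl fun u _ => ?_
  rw [sum_product]
  exact sum_congr rfl fun v _ => (card_filter _ _).symm

lemma tripleCount_le (E : Finset (Finset ℕ)) (V₁ V₂ V₃ : Finset ℕ) :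
    tripleCount E V₁ V₂ V₃ ≤ #V₁ * #V₂ * #V₃ :=
  (card_filter_le _ _).trans_eq (by rw [card_product, card_product, mul_assoc])

lemma sum_tripleCount_eq_sum_pairDeg {ι : Type*} {n : ℕ} (E : Finset (Finset ℕ))
    (V₁ V₂ : Finset ℕ) {s : Finset ι} {P : ι → Finset ℕ} (hP : (s : Set ι).PairwiseDisjoint P)
    (hcover : s.biUnion P = Icc 1 n) :
    ∑ k ∈ s, tripleCount E V₁ V₂ (P k) = ∑ u ∈ V₁, ∑ v ∈ V₂, pairDeg n E u v := by
  simp_rw [tripleCount_eq_sum]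
  rw [sum_comm]
  refine sum_congr rfl fun u _ => ?_
  rw [sum_comm]
  refine sum_congr rfl fun v _ => ?_
  rw [pairDeg, ← hcover, filter_biUnion, card_biUnion]
  exact fun a ha b hb hab => disjoint_filter_filter (hP ha hb hab)

namespace DegCond

variable {n : ℕ} {E : Finset (Finset ℕ)} {α : ℝ}

lemma add_le_pairDeg (h : DegCond n E α) {u v : ℕ} (hu : u ∈ Icc 1 n) (hv : v ∈ Icc 1 n)
    (huv : u ≠ v) {a : ℝ} (hau : a ≤ u) (hav : a ≤ v) (han : a ≤ n / 2) :
    a + α * n ≤ pairDeg n E u v :=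
  le_trans (by gcongr; exact le_min (le_min hau hav) han) (h u hu v hv huv)

lemma card_mul_card_mul_le_sum_pairDeg (h : DegCond n E α) {V₁ V₂ : Finset ℕ}
    (h₁ : V₁ ⊆ Icc 1 n) (h₂ : V₂ ⊆ Icc 1 n) (hV : Disjoint V₁ V₂) {a : ℝ}
    (ha₁ : ∀ u ∈ V₁, a ≤ u) (ha₂ : ∀ v ∈ V₂, a ≤ v) (han : a ≤ n / 2) :
    #V₁ * #V₂ * (a + α * n) ≤ ∑ u ∈ V₁, ∑ v ∈ V₂, (pairDeg n E u v : ℝ) :=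
  calc (#V₁ * #V₂ * (a + α * n) : ℝ) = ∑ u ∈ V₁, ∑ v ∈ V₂, (a + α * n) := by
        simp only [sum_const, nsmul_eq_mul]; ring
    _ ≤ _ := sum_le_sum fun u hu => sum_le_sum fun v hv =>
        h.add_le_pairDeg (h₁ hu) (h₂ hv) (disjoint_iff_ne.1 hV u hu v hv) (ha₁ u hu) (ha₂ v hv)
          han

end DegCond

section Partition

variable {t m n : ℕ} {E : Finset (Finset ℕ)} {P : ℕ → Finset ℕ} {i j : ℕ}

lemma le_sum_tripleCount {α : ℝ} (hdeg : DegCond n E α)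
    (hdisj : ∀ i ≤ t, ∀ j ≤ t, i ≠ j → Disjoint (P i) (P j))
    (hcover : (range (t + 1)).biUnion P = Icc 1 n) (hcard : ∀ i, 1 ≤ i → i ≤ t → #(P i) = m)
    (hi : i ∈ Icc 1 t) (hj : j ∈ Icc 1 t) (hij : i ≠ j) {a : ℝ} (hai : ∀ u ∈ P i, a ≤ u)
    (haj : ∀ v ∈ P j, a ≤ v) (han : a ≤ n / 2) :
    (m : ℝ) ^ 2 * (a + α * n) ≤ ∑ k ∈ range (t + 1), (tripleCount E (P i) (P j) (P k) : ℝ) := by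
  rw [mem_Icc] at hi hj
  have hsub : ∀ k ≤ t, P k ⊆ Icc 1 n := fun k hk =>
    hcover ▸ subset_biUnion_of_mem P (mem_range.2 (Nat.lt_succ_of_le hk))
  have hpart : ((range (t + 1) : Finset ℕ) : Set ℕ).PairwiseDisjoint P := fun k hk l hl hkl =>
    hdisj k (Nat.lt_succ_iff.1 (mem_range.1 hk)) l (Nat.lt_succ_iff.1 (mem_range.1 hl)) hkl
  rw [← Nat.cast_sum, sum_tripleCount_eq_sum_pairDeg E _ _ hpart hcover]
  push_cast
  convert hdeg.card_mul_card_mul_le_sum_pairDeg (hsub i hi.2) (hsub j hj.2)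
    (hdisj i hi.2 j hj.2 hij) hai haj han using 1
  rw [hcard i hi.1 hi.2, hcard j hj.1 hj.2]
  ring

-- The `+ 2` accounts for the classes `k = i` and `k = j`.
lemma sum_tripleCount_le (hcard : ∀ i, 1 ≤ i → i ≤ t → #(P i) = m) (hi : i ∈ Icc 1 t)
    (hj : j ∈ Icc 1 t) {c : ℝ} (hc : 0 ≤ c) :
    ∑ k ∈ range (t + 1), (tripleCount E (P i) (P j) (P k) : ℝ) ≤
      (m : ℝ) ^ 2 * #(P 0) +
        (#((((Icc 1 t).erase i).erase j).filter
          fun k => c ≤ (tripleCount E (P i) (P j) (P k) : ℝ)) + 2) * (m : ℝ) ^ 3 + t * c := by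
  rw [mem_Icc] at hi hj
  set T : ℕ → ℝ := fun k => tripleCount E (P i) (P j) (P k)
  have hT : ∀ k, T k ≤ (m : ℝ) ^ 2 * #(P k) := fun k => by
    have := tripleCount_le E (P i) (P j) (P k)
    rw [hcard i hi.1 hi.2, hcard j hj.1 hj.2] at this
    simp only [T]
    exact_mod_cast this.trans_eq (by ring)
  have hTm : ∀ k ∈ Icc 1 t, T k ≤ (m : ℝ) ^ 3 := fun k hk => by
    rw [mem_Icc] at hk
    simpa [hcard k hk.1 hk.2, pow_succ] using hT k
  have hdense : (#((Icc 1 t).filter fun k => c ≤ T k) : ℝ) ≤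
      #((((Icc 1 t).erase i).erase j).filter fun k => c ≤ T k) + 2 := by
    have h₁ := card_filter_le_card_filter_erase_add_one (Icc 1 t) (fun k => c ≤ T k) i
    have h₂ := card_filter_le_card_filter_erase_add_one ((Icc 1 t).erase i) (fun k => c ≤ T k) j
    exact_mod_cast (h₁.trans (Nat.add_le_add_right h₂ 1)).trans_eq (by ring)
  have hrange : range (t + 1) = insert 0 (Icc 1 t) := by
    ext x
    simp only [mem_range, mem_insert, mem_Icc]
    omega
  rw [hrange, sum_insert (by simp)]
  have hsum := sum_le_card_filter_mul_add (Icc 1 t) T hTm hc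
  rw [Nat.card_Icc, Nat.add_sub_cancel] at hsum
  linarith [hT 0, mul_le_mul_of_nonneg_right hdense (by positivity : (0 : ℝ) ≤ (m : ℝ) ^ 3)]

end Partition

theorem le_card_dense_tripleCount {α δ : ℝ} (hδ : 0 < δ) (hδ1 : 2 * δ ≤ 1) (hδα : 48 * δ ≤ α)
    {t t₀ n m : ℕ} (ht₀ : 1 ≤ δ * t₀) (ht₀t : t₀ ≤ t) (hn : 0 < n) {E : Finset (Finset ℕ)}
    (hdeg : DegCond n E α) {P : ℕ → Finset ℕ}
    (hdisj : ∀ i ≤ t, ∀ j ≤ t, i ≠ j → Disjoint (P i) (P j))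
    (hcover : (range (t + 1)).biUnion P = Icc 1 n) (hP0 : (#(P 0) : ℝ) ≤ δ * n)
    (hcard : ∀ i, 1 ≤ i → i ≤ t → #(P i) = m) (hmlo : (1 - δ) * n / t ≤ (m : ℝ))
    (hmhi : (m : ℝ) ≤ n / t)
    (hvert : ∀ i, 1 ≤ i → i ≤ t → ∀ v ∈ P i, (i : ℝ) * m - n / t₀ ≤ v)
    {i j : ℕ} (hi : i ∈ Icc 1 t) (hj : j ∈ Icc 1 t) (hij : i ≠ j) :
    min (min (i : ℝ) j) (t / 2) + α / 3 * t ≤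
      #((((Icc 1 t).erase i).erase j).filter
        fun k => α / 2 * (m : ℝ) ^ 3 ≤ (tripleCount E (P i) (P j) (P k) : ℝ)) := by
  have hα : 0 < α := by linarith
  set A := min (min (i : ℝ) j) (t / 2)
  have ht₀pos : (0 : ℝ) < t₀ := pos_of_mul_pos_right (one_pos.trans_le ht₀) hδ.le
  have hδt : 1 ≤ δ * t := ht₀.trans (by gcongr)
  have htpos : (0 : ℝ) < t := ht₀pos.trans_le (by exact_mod_cast ht₀t)
  have hnpos : (0 : ℝ) < n := by exact_mod_cast hn
  have htm : t * m ≤ (n : ℝ) := by rwa [le_div_iff₀' htpos] at hmhi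
  have hntm : (n : ℝ) ≤ 2 * (t * m) := by
    rw [div_le_iff₀ htpos] at hmlo
    nlinarith
  have hmpos : (0 : ℝ) < m := by nlinarith
  have hshift : (n : ℝ) / t₀ ≤ δ * n := by
    rw [div_le_iff₀ ht₀pos]
    nlinarith
  have hbelow : ∀ l ∈ Icc 1 t, A ≤ l → ∀ v ∈ P l, A * m - δ * n ≤ v := by
    intro l hl hAl v hv
    rw [mem_Icc] at hl
    nlinarith [hvert l hl.1 hl.2 v hv]
  have han : A * m - δ * n ≤ n / 2 := by
    nlinarith [min_le_right (min (i : ℝ) j) (t / 2), mul_nonneg hδ.le hnpos.le]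
  have hlower := le_sum_tripleCount hdeg hdisj hcover hcard hi hj hij
    (hbelow i hi ((min_le_left _ _).trans (min_le_left _ _)))
    (hbelow j hj ((min_le_left _ _).trans (min_le_right _ _))) han
  have hupper := sum_tripleCount_le (E := E) hcard hi hj
    (by positivity : 0 ≤ α / 2 * (m : ℝ) ^ 3)
  set g : ℝ := (#((((Icc 1 t).erase i).erase j).filter
    fun k => α / 2 * (m : ℝ) ^ 3 ≤ (tripleCount E (P i) (P j) (P k) : ℝ)) : ℝ)
  have hm2 : (0 : ℝ) ≤ m ^ 2 := sq_nonneg _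
  have hcount : m ^ 2 * (m * (A - 4 * δ * t + α * t / 2 - 2 - g)) ≤ (0 : ℝ) := by
    nlinarith [mul_le_mul_of_nonneg_left hP0 hm2,
      mul_le_mul_of_nonneg_left hntm (mul_nonneg hm2 hδ.le),
      mul_le_mul_of_nonneg_left htm (mul_nonneg hm2 hα.le)]
  have hdense : A - 4 * δ * t + α * t / 2 - 2 - g ≤ 0 :=
    nonpos_of_mul_nonpos_right (nonpos_of_mul_nonpos_right hcount (by positivity)) hmpos
  nlinarith

end

/-- **Dense triplets claim.** For every `α > 0` there is `δ > 0` such that for all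
integers `t ≥ t₀ ≥ 1/δ` there is `n₀` such that the following holds for `n ≥ n₀`.
If `([n], E)` satisfies the degree condition, and `[n] = V₀ ∪̇ V₁ ∪̇ … ∪̇ V_t` (the
classes given by `P 0, …, P t`) is a partition with `|V₀| ≤ δn`,
`|V₁| = … = |V_t| = m` where `(1−δ)n/t ≤ m ≤ n/t`, and every `v ∈ V_i` (`i ∈ [t]`)
satisfies `v ≥ i·m − n/t₀`, then for every pair of distinct `i, j ∈ [t]`, the number
of `k ∈ [t] \ {i,j}` with `e(V_i, V_j, V_k) ≥ (α/2)·m³` is at least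
`min(i, j, t/2) + (α/3)·t`. -/
theorem stmt_12 (α : ℝ) (hα : 0 < α) :
    ∃ δ : ℝ, 0 < δ ∧ ∀ t t₀ : ℕ, t₀ ≤ t → 1 / δ ≤ (t₀ : ℝ) →
      ∃ n₀ : ℕ, ∀ n : ℕ, n₀ ≤ n →
      ∀ E : Finset (Finset ℕ), IsThreeGraph n E → DegCond n E α →
      ∀ m : ℕ, ∀ P : ℕ → Finset ℕ,
        (∀ i ≤ t, ∀ j ≤ t, i ≠ j → Disjoint (P i) (P j)) →
        ((Finset.range (t + 1)).biUnion P = Finset.Icc 1 n) →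
        ((P 0).card : ℝ) ≤ δ * n →
        (∀ i, 1 ≤ i → i ≤ t → (P i).card = m) →
        (1 - δ) * n / t ≤ (m : ℝ) → (m : ℝ) ≤ (n : ℝ) / t →
        (∀ i, 1 ≤ i → i ≤ t → ∀ v ∈ P i, (i : ℝ) * m - (n : ℝ) / t₀ ≤ (v : ℝ)) →
        ∀ i, 1 ≤ i → i ≤ t → ∀ j, 1 ≤ j → j ≤ t → i ≠ j →
          min (min (i : ℝ) (j : ℝ)) ((t : ℝ) / 2) + α / 3 * t ≤
            (((((Finset.Icc 1 t).erase i).erase j).filter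
              fun k => α / 2 * (m : ℝ) ^ 3 ≤ (tripleCount E (P i) (P j) (P k) : ℝ)).card : ℝ) := by
  have hδ : 0 < min α 1 / 48 := by positivity
  refine ⟨min α 1 / 48, hδ, fun t t₀ ht₀t ht₀ => ⟨1, ?_⟩⟩
  intro n hn E _ hdeg m P hdisj hcover hP0 hcard hmlo hmhi hvert i hi₁ hit j hj₁ hjt hij
  exact le_card_dense_tripleCount hδ (by linarith [min_le_right α 1])
    (by linarith [min_le_left α 1])
    (by rwa [div_le_iff₀ hδ, mul_comm] at ht₀) ht₀t hn hdeg hdisj hcover hP0 hcard hmlo hmhi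
    hvert (Finset.mem_Icc.2 ⟨hi₁, hit⟩) (Finset.mem_Icc.2 ⟨hj₁, hjt⟩) hij
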